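/- For |t|<1, the power series t · F(t) with F(t) = Σ_{m,n≥0} (1/3)_{m+n}/(4/3)_{m+n} · (1/3)_n(1/3)_n/((2/3)_n n! m!) · (1)_m · t^{3n+3m} is a primitive (antiderivative with constant term 0) of (1/(1−t³))·₂F₁(1/3,1/3;2/3;t³), i.e. d/dt [t·F(t)] = (1−t³)^{−1} ₂F₁(1/3,1/3;2/3;t³). -/

import Mathlib

open scoped BigOperators

/-- The Pochhammer symbol `(a)ₙ = a(a+1)⋯(a+n−1)`. -/
noncomputable def poch (a : ℂ) (n : ℕ) : ℂ := ∏ i ∈ Finset.range n, (a + i)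

/-- The Gauss hypergeometric series `₂F₁(a,b;c;x) = Σ (a)ₙ(b)ₙ/((c)ₙ n!) xⁿ`. -/
noncomputable def F21 (a b c x : ℂ) : ℂ :=
  ∑' n : ℕ, poch a n * poch b n / (poch c n * (n.factorial : ℂ)) * x ^ n

/-- `F(t) = Σ_{m,n≥0} (1/3)_{m+n}/(4/3)_{m+n} · (1/3)ₙ(1/3)ₙ/((2/3)ₙ n! m!) · (1)ₘ · t^{3n+3m}`,
summed over `p = (m, n) : ℕ × ℕ`. -/
noncomputable def kampeF (t : ℂ) : ℂ :=
  ∑' p : ℕ × ℕ,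
    poch (1/3) (p.1 + p.2) / poch (4/3) (p.1 + p.2)
      * (poch (1/3) p.2 * poch (1/3) p.2)
        / (poch (2/3) p.2 * (p.2.factorial : ℂ) * (p.1.factorial : ℂ))
      * poch 1 p.1 * t ^ (3 * p.2 + 3 * p.1)

/-! Since `(1/3)ₖ/(4/3)ₖ = 1/(3k+1)` and `(1)ₘ = m!`, the `(m, n)` term of `t·F(t)` is
`aₙ t^(3(m+n)+1)/(3(m+n)+1)`, where `aₙ` are the coefficients of `₂F₁(1/3,1/3;2/3;·)`.
Differentiating termwise (legitimate on `|t| < 1` because `|aₙ| ≤ 1`) gives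
`Σ_{m,n} t^(3m) · aₙ t^(3n)`, the product of the geometric series `(1 - t³)⁻¹` with
`₂F₁(1/3,1/3;2/3;t³)`. -/

open Finset
open scoped Nat

lemma poch_succ (a : ℂ) (n : ℕ) : poch a (n + 1) = poch a n * (a + n) :=
  prod_range_succ _ _

lemma poch_succ' (a : ℂ) (n : ℕ) : poch a (n + 1) = a * poch (a + 1) n := by
  rw [poch, prod_range_succ', Nat.cast_zero, add_zero, mul_comm]
  exact congrArg (a * ·) (prod_congr rfl fun i _ => by push_cast; ring)

lemma poch_one (n : ℕ) : poch 1 n = n ! := by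
  rw [poch, ← prod_range_add_one_eq_factorial, Nat.cast_prod]
  exact prod_congr rfl fun i _ => by push_cast; ring

lemma poch_ne_zero {a : ℂ} (ha : 0 < a.re) (n : ℕ) : poch a n ≠ 0 :=
  prod_ne_zero_iff.2 fun i _ h => by
    have := congrArg Complex.re h
    simp only [Complex.add_re, Complex.natCast_re, Complex.zero_re] at this
    linarith [i.cast_nonneg (α := ℝ)]

lemma poch_div_poch_add_one {a : ℂ} (ha : 0 < a.re) (n : ℕ) :
    poch a n / poch (a + 1) n = a / (a + n) := by
  have han : a + n ≠ 0 := fun h => poch_ne_zero ha (n + 1) (by rw [poch_succ, h, mul_zero])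
  rw [div_eq_div_iff (poch_ne_zero (by simpa using ha.trans (lt_add_one _)) n) han,
    ← poch_succ, poch_succ']

lemma poch_third_div_poch_four_thirds (k : ℕ) :
    poch (1/3) k / poch (4/3) k = (3 * k + 1 : ℂ)⁻¹ := by
  have h := poch_div_poch_add_one (a := 1/3) (by norm_num) k
  norm_num at h
  rw [h]
  field_simp
  ring

lemma norm_poch_ofReal {a : ℝ} (ha : 0 ≤ a) (n : ℕ) :
    ‖poch a n‖ = ∏ i ∈ range n, (a + i) := by
  rw [poch, norm_prod]
  refine prod_congr rfl fun i _ => ?_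
  rw [← Complex.ofReal_natCast, ← Complex.ofReal_add, Complex.norm_of_nonneg (by positivity)]

lemma norm_poch_le_of_le {a b : ℝ} (ha : 0 ≤ a) (hab : a ≤ b) (n : ℕ) :
    ‖poch a n‖ ≤ ‖poch b n‖ := by
  rw [norm_poch_ofReal ha, norm_poch_ofReal (ha.trans hab)]
  exact prod_le_prod (fun i _ => by positivity) fun i _ => by linarith

noncomputable def gaussCoeff (a b c : ℂ) (n : ℕ) : ℂ :=
  poch a n * poch b n / (poch c n * n !)

lemma F21_eq_tsum_gaussCoeff (a b c x : ℂ) : F21 a b c x = ∑' n, gaussCoeff a b c n * x ^ n :=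
  rfl

lemma norm_gaussCoeff_le_one {a b c : ℝ} (ha : 0 ≤ a) (hac : a ≤ c) (hb : 0 ≤ b) (hb1 : b ≤ 1)
    (n : ℕ) : ‖gaussCoeff a b c n‖ ≤ 1 := by
  have hbn : ‖poch b n‖ ≤ ‖(n ! : ℂ)‖ := by
    simpa [poch_one] using norm_poch_le_of_le hb hb1 n
  rw [gaussCoeff, norm_div, norm_mul, norm_mul]
  exact div_le_one_of_le₀ (mul_le_mul (norm_poch_le_of_le ha hac n) hbn (norm_nonneg _)
    (norm_nonneg _)) (by positivity)

lemma kampeF_summand (m n : ℕ) (s : ℂ) :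
    poch (1/3) (m + n) / poch (4/3) (m + n) * (poch (1/3) n * poch (1/3) n)
        / (poch (2/3) n * n ! * m !) * poch 1 m * s ^ (3 * n + 3 * m)
      = (3 * (m + n : ℕ) + 1 : ℂ)⁻¹ * gaussCoeff (1/3) (1/3) (2/3) n * s ^ (3 * (m + n)) := by
  have hm : (m ! : ℂ) ≠ 0 := by exact_mod_cast m.factorial_ne_zero
  have hk : (3 * (m + n : ℕ) + 1 : ℂ) ≠ 0 := by norm_cast
  rw [poch_third_div_poch_four_thirds, poch_one, gaussCoeff,
    show 3 * n + 3 * m = 3 * (m + n) by ring]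
  field_simp

lemma mul_kampeF (s : ℂ) :
    s * kampeF s = ∑' p : ℕ × ℕ, (3 * (p.1 + p.2 : ℕ) + 1 : ℂ)⁻¹
      * gaussCoeff (1/3) (1/3) (2/3) p.2 * s ^ (3 * (p.1 + p.2) + 1) := by
  rw [kampeF, ← tsum_mul_left]
  refine tsum_congr fun p => ?_
  rw [kampeF_summand, pow_succ]
  ring

lemma tsum_prod_mul_geometric {𝕜 : Type*} [NormedField 𝕜] [CompleteSpace 𝕜] {c : ℕ → 𝕜} {C : ℝ}
    (hc : ∀ n, ‖c n‖ ≤ C) {x : 𝕜} (hx : ‖x‖ < 1) :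
    ∑' p : ℕ × ℕ, c p.2 * x ^ (p.1 + p.2) = (1 - x)⁻¹ * ∑' n, c n * x ^ n := by
  have hgeom : Summable fun n => ‖x‖ ^ n := summable_geometric_of_lt_one (norm_nonneg _) hx
  have hcx : Summable fun n => ‖c n * x ^ n‖ :=
    (hgeom.mul_left C).of_nonneg_of_le (fun _ => norm_nonneg _) fun n => by
      rw [norm_mul, norm_pow]
      exact mul_le_mul_of_nonneg_right (hc n) (by positivity)
  rw [← tsum_geometric_of_norm_lt_one hx,
    tsum_mul_tsum_of_summable_norm (by simpa only [norm_pow] using hgeom) hcx]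
  exact tsum_congr fun p => by ring

lemma hasDerivAt_tsum_prod_primitive {c : ℕ → ℂ} {C : ℝ} (hc : ∀ n, ‖c n‖ ≤ C) {d : ℕ}
    (hd : 0 < d) {t : ℂ} (ht : ‖t‖ < 1) :
    HasDerivAt (fun s => ∑' p : ℕ × ℕ, (d * (p.1 + p.2 : ℕ) + 1 : ℂ)⁻¹ * c p.2
        * s ^ (d * (p.1 + p.2) + 1))
      (∑' p : ℕ × ℕ, c p.2 * t ^ (d * (p.1 + p.2))) t := by
  obtain ⟨r, htr, hr1⟩ := exists_between ht
  have hr0 : 0 ≤ r := (norm_nonneg t).trans htr.le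
  have hrd : r ^ d < 1 := pow_lt_one₀ hr0 hr1 hd.ne'
  have hgeom : Summable fun n => (r ^ d) ^ n := summable_geometric_of_lt_one (by positivity) hrd
  have hu : Summable fun p : ℕ × ℕ => C * ((r ^ d) ^ p.1 * (r ^ d) ^ p.2) :=
    (hgeom.mul_of_nonneg hgeom (fun _ => by positivity) fun _ => by positivity).mul_left C
  have hderiv : ∀ p : ℕ × ℕ, ∀ y ∈ Metric.ball (0 : ℂ) r,
      HasDerivAt (fun s => (d * (p.1 + p.2 : ℕ) + 1 : ℂ)⁻¹ * c p.2 * s ^ (d * (p.1 + p.2) + 1))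
        (c p.2 * y ^ (d * (p.1 + p.2))) y := fun p y _ => by
    have hk : (d * (p.1 + p.2 : ℕ) + 1 : ℂ) ≠ 0 := by norm_cast
    refine ((hasDerivAt_pow _ y).const_mul _).congr_deriv ?_
    rw [Nat.add_sub_cancel]
    push_cast at hk ⊢
    field_simp
  have hbound : ∀ p : ℕ × ℕ, ∀ y ∈ Metric.ball (0 : ℂ) r,
      ‖c p.2 * y ^ (d * (p.1 + p.2))‖ ≤ C * ((r ^ d) ^ p.1 * (r ^ d) ^ p.2) := fun p y hy => by
    rw [mem_ball_zero_iff] at hy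
    rw [norm_mul, norm_pow, ← pow_add, ← pow_mul]
    exact mul_le_mul (hc p.2) (pow_le_pow_left₀ (norm_nonneg y) hy.le _) (by positivity)
      ((norm_nonneg _).trans (hc 0))
  exact hasDerivAt_tsum_of_isPreconnected hu Metric.isOpen_ball
    (convex_ball (0 : ℂ) r).isPreconnected hderiv hbound
    (Metric.mem_ball_self ((norm_nonneg t).trans_lt htr)) (by simp) (mem_ball_zero_iff.2 htr)

/-- For `|t| < 1`, `t·F(t)` is a primitive of `(1−t³)⁻¹·₂F₁(1/3,1/3;2/3;t³)`:
`d/dt [t·F(t)] = (1−t³)⁻¹ ₂F₁(1/3,1/3;2/3;t³)`. -/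
theorem primitive_one (t : ℂ) (ht : ‖t‖ < 1) :
    HasDerivAt (fun s : ℂ => s * kampeF s)
      ((1 - t ^ 3)⁻¹ * F21 (1/3) (1/3) (2/3) (t ^ 3)) t := by
  have hc (n : ℕ) : ‖gaussCoeff (1/3) (1/3) (2/3) n‖ ≤ 1 := by
    have := norm_gaussCoeff_le_one (a := 1/3) (b := 1/3) (c := 2/3)
      (by norm_num) (by norm_num) (by norm_num) (by norm_num) n
    push_cast at this
    exact this
  have ht3 : ‖t ^ 3‖ < 1 := by simpa using pow_lt_one₀ (norm_nonneg t) ht three_ne_zero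
  rw [funext mul_kampeF, F21_eq_tsum_gaussCoeff, ← tsum_prod_mul_geometric hc ht3]
  simpa only [Nat.cast_ofNat, pow_mul] using hasDerivAt_tsum_prod_primitive hc three_pos ht
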